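/- Generalized Euler–Rodrigues formula (second form): if σ² + θ² > 0, then for every real t, exp(tF) = ((θ²·cosh(tσ)+σ²·cos(tθ))/(σ²+θ²))·I + ((σ·sinh(tσ)+θ·sin(tθ))/(σ²+θ²))·F + ((θ·sinh(tσ)−σ·sin(tθ))/(σ²+θ²))·F̃ + ((cosh(tσ)−cos(tθ))/(σ²+θ²))·F², where exp denotes the matrix exponential. -/

import Mathlib

/-!
Left multiplication by `F` preserves the span of `I, F, F̃, F²`, because `F F̃ = u I` and
`F³ = 2v F + u F̃`; hence `F⁴ - 2v F² - u² I = (F² - σ² I)(F² + θ² I) = 0`, which is where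
`cosh (tσ)` and `cos (tθ)` come from. The stated combination `g` solves `g' = F g` with `g 0 = I`,
and `s ↦ exp ((t - s) F) g s` has zero derivative, so `g t = exp (t F)`.
-/

open NormedSpace

theorem eq_exp_smul_of_hasDerivAt {A : Type*} [NormedRing A] [NormedAlgebra ℝ A] [CompleteSpace A]
    {a : A} {g : ℝ → A} (hg : ∀ s, HasDerivAt g (a * g s) s) (hg0 : g 0 = 1) (t : ℝ) :
    exp (t • a) = g t := by
  have hderiv : ∀ s, HasDerivAt (fun s ↦ exp ((t - s) • a) * g s) 0 s := fun s ↦ by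
    have hexp := (hasDerivAt_exp_smul_const a (t - s)).scomp s ((hasDerivAt_id s).const_sub t)
    have := hexp.mul (hg s)
    rwa [neg_one_smul, neg_mul, mul_assoc, Function.comp_apply, neg_add_cancel] at this
  simpa [hg0] using is_const_of_deriv_eq_zero (fun s ↦ (hderiv s).differentiableAt)
    (fun s ↦ (hderiv s).deriv) 0 t

section EulerRodrigues

variable {A : Type*} [NormedRing A] [NormedAlgebra ℝ A]

noncomputable def eulerRodriguesSecond (σ θ : ℝ) (F Ft : A) (t : ℝ) : A :=
  ((θ ^ 2 * Real.cosh (t * σ) + σ ^ 2 * Real.cos (t * θ)) / (σ ^ 2 + θ ^ 2)) • (1 : A)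
    + ((σ * Real.sinh (t * σ) + θ * Real.sin (t * θ)) / (σ ^ 2 + θ ^ 2)) • F
    + ((θ * Real.sinh (t * σ) - σ * Real.sin (t * θ)) / (σ ^ 2 + θ ^ 2)) • Ft
    + ((Real.cosh (t * σ) - Real.cos (t * θ)) / (σ ^ 2 + θ ^ 2)) • (F ^ 2)

theorem eulerRodriguesSecond_zero {σ θ : ℝ} (h : σ ^ 2 + θ ^ 2 ≠ 0) (F Ft : A) :
    eulerRodriguesSecond σ θ F Ft 0 = 1 := by
  simp [eulerRodriguesSecond, add_comm (θ ^ 2), h]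

theorem hasDerivAt_eulerRodriguesSecond {σ θ : ℝ} {F Ft : A}
    (hFFt : F * Ft = (σ * θ) • 1) (hF3 : F ^ 3 = (σ ^ 2 - θ ^ 2) • F + (σ * θ) • Ft) (t : ℝ) :
    HasDerivAt (eulerRodriguesSecond σ θ F Ft) (F * eulerRodriguesSecond σ θ F Ft t) t := by
  have hch := (hasDerivAt_mul_const σ (x := t)).cosh
  have hsh := (hasDerivAt_mul_const σ (x := t)).sinh
  have hc := (hasDerivAt_mul_const θ (x := t)).cos
  have hs := (hasDerivAt_mul_const θ (x := t)).sin
  have h0 := ((hch.const_mul (θ ^ 2)).add (hc.const_mul (σ ^ 2))).div_const (σ ^ 2 + θ ^ 2)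
  have h1 := ((hsh.const_mul σ).add (hs.const_mul θ)).div_const (σ ^ 2 + θ ^ 2)
  have h2 := ((hsh.const_mul θ).sub (hs.const_mul σ)).div_const (σ ^ 2 + θ ^ 2)
  have h3 := (hch.sub hc).div_const (σ ^ 2 + θ ^ 2)
  refine ((((h0.smul_const (1 : A)).add (h1.smul_const F)).add
    (h2.smul_const Ft)).add (h3.smul_const (F ^ 2))).congr_deriv ?_
  rw [pow_succ'] at hF3
  simp only [eulerRodriguesSecond, mul_add, mul_smul_comm, mul_one, hFFt, hF3, ← sq]
  match_scalars <;> ring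

theorem exp_smul_eq_eulerRodriguesSecond [CompleteSpace A] {σ θ : ℝ} {F Ft : A}
    (h : σ ^ 2 + θ ^ 2 ≠ 0) (hFFt : F * Ft = (σ * θ) • 1)
    (hF3 : F ^ 3 = (σ ^ 2 - θ ^ 2) • F + (σ * θ) • Ft) (t : ℝ) :
    exp (t • F) = eulerRodriguesSecond σ θ F Ft t :=
  eq_exp_smul_of_hasDerivAt (hasDerivAt_eulerRodriguesSecond hFFt hF3)
    (eulerRodriguesSecond_zero h F Ft) t

end EulerRodrigues

noncomputable def faradayMatrix (e1 e2 e3 b1 b2 b3 : ℝ) : Matrix (Fin 4) (Fin 4) ℝ :=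
  !![0, b3, -b2, e1; -b3, 0, b1, e2; b2, -b1, 0, e3; e1, e2, e3, 0]

noncomputable def dualFaradayMatrix (e1 e2 e3 b1 b2 b3 : ℝ) : Matrix (Fin 4) (Fin 4) ℝ :=
  !![0, -e3, e2, b1; e3, 0, -e1, b2; -e2, e1, 0, b3; b1, b2, b3, 0]

theorem faradayMatrix_mul_dualFaradayMatrix (e1 e2 e3 b1 b2 b3 : ℝ) :
    faradayMatrix e1 e2 e3 b1 b2 b3 * dualFaradayMatrix e1 e2 e3 b1 b2 b3 =
      (e1 * b1 + e2 * b2 + e3 * b3) • 1 := by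
  ext i j
  fin_cases i <;> fin_cases j <;>
    simp [faradayMatrix, dualFaradayMatrix, Matrix.mul_apply, Fin.sum_univ_four] <;> ring

theorem faradayMatrix_pow_three (e1 e2 e3 b1 b2 b3 : ℝ) :
    faradayMatrix e1 e2 e3 b1 b2 b3 ^ 3 =
      ((e1 ^ 2 + e2 ^ 2 + e3 ^ 2) - (b1 ^ 2 + b2 ^ 2 + b3 ^ 2)) • faradayMatrix e1 e2 e3 b1 b2 b3
        + (e1 * b1 + e2 * b2 + e3 * b3) • dualFaradayMatrix e1 e2 e3 b1 b2 b3 := by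
  ext i j
  fin_cases i <;> fin_cases j <;>
    simp [faradayMatrix, dualFaradayMatrix, pow_succ, Matrix.mul_apply, Fin.sum_univ_four] <;> ring

theorem Real.abs_le_sqrt_sq_add_sq (u v : ℝ) : |v| ≤ √(u ^ 2 + v ^ 2) :=
  Real.abs_le_sqrt (by nlinarith)

theorem Real.sqrt_sqrt_add_mul_sqrt_sqrt_sub (u v : ℝ) :
    √(√(u ^ 2 + v ^ 2) + v) * √(√(u ^ 2 + v ^ 2) - v) = |u| := by
  have hv := Real.abs_le_sqrt_sq_add_sq u v
  rw [← Real.sqrt_mul (by linarith [neg_abs_le v]), ← Real.sqrt_sq_eq_abs]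
  congr 1
  nlinarith [Real.sq_sqrt (by positivity : 0 ≤ u ^ 2 + v ^ 2)]

theorem Real.sq_sqrt_sqrt_add_sub_sq_sqrt_sqrt_sub (u v : ℝ) :
    √(√(u ^ 2 + v ^ 2) + v) ^ 2 - √(√(u ^ 2 + v ^ 2) - v) ^ 2 = 2 * v := by
  have hv := Real.abs_le_sqrt_sq_add_sq u v
  rw [Real.sq_sqrt (by linarith [neg_abs_le v]), Real.sq_sqrt (by linarith [le_abs_self v])]
  ring

theorem euler_rodrigues_second
(e1 e2 e3 b1 b2 b3 u v σ θ : ℝ)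
    (hu : u = e1 * b1 + e2 * b2 + e3 * b3)
    (hv : v = ((e1 ^ 2 + e2 ^ 2 + e3 ^ 2) - (b1 ^ 2 + b2 ^ 2 + b3 ^ 2)) / 2)
    (hσ : σ = Real.sqrt (Real.sqrt (u ^ 2 + v ^ 2) + v))
    (hθ : θ = (if u < 0 then (-1 : ℝ) else 1) * Real.sqrt (Real.sqrt (u ^ 2 + v ^ 2) - v))
    (F Ft : Matrix (Fin 4) (Fin 4) ℝ)
    (hF : F = !![0, b3, -b2, e1; -b3, 0, b1, e2; b2, -b1, 0, e3; e1, e2, e3, 0])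
    (hFt : Ft = !![0, -e3, e2, b1; e3, 0, -e1, b2; -e2, e1, 0, b3; b1, b2, b3, 0])
    (hpos : σ ^ 2 + θ ^ 2 > 0) :
    ∀ t : ℝ, NormedSpace.exp (t • F) =
      ((θ ^ 2 * Real.cosh (t * σ) + σ ^ 2 * Real.cos (t * θ)) / (σ ^ 2 + θ ^ 2)) • (1 : Matrix (Fin 4) (Fin 4) ℝ)
      + ((σ * Real.sinh (t * σ) + θ * Real.sin (t * θ)) / (σ ^ 2 + θ ^ 2)) • F
      + ((θ * Real.sinh (t * σ) - σ * Real.sin (t * θ)) / (σ ^ 2 + θ ^ 2)) • Ft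
      + ((Real.cosh (t * σ) - Real.cos (t * θ)) / (σ ^ 2 + θ ^ 2)) • (F ^ 2) := by
  have hσθ : σ * θ = u := by
    rw [hσ, hθ, mul_left_comm, Real.sqrt_sqrt_add_mul_sqrt_sqrt_sub]
    split_ifs with hu0
    · rw [abs_of_neg hu0, neg_one_mul, neg_neg]
    · rw [abs_of_nonneg (not_lt.mp hu0), one_mul]
  have hσθ2 : σ ^ 2 - θ ^ 2 = 2 * v := by
    rw [hσ, hθ, mul_pow, ← Real.sq_sqrt_sqrt_add_sub_sq_sqrt_sqrt_sub u v]
    split_ifs <;> norm_num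
  let := Matrix.linftyOpNormedRing (n := Fin 4) (α := ℝ)
  let := Matrix.linftyOpNormedAlgebra (R := ℝ) (n := Fin 4) (α := ℝ)
  refine exp_smul_eq_eulerRodriguesSecond hpos.ne' ?_ ?_
  · rw [hσθ, hu, hF, hFt]
    exact faradayMatrix_mul_dualFaradayMatrix e1 e2 e3 b1 b2 b3
  · rw [hσθ2, hσθ, hv, hu, hF, hFt, mul_div_cancel₀ _ two_ne_zero]
    exact faradayMatrix_pow_three e1 e2 e3 b1 b2 b3
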